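/- arXiv:2505.00181 — 6 statements merged into one kernel-verified Lean document; each statement's English description precedes it below -/
import Mathlib

section
/- For every d ∈ ℕ, the determinant of the (d+1)×(d+1) Hankel matrix of Catalan numbers, with (i,j)-entry C_{i+j} (the (i+j)-th Catalan number), equals 1. In particular this matrix is invertible. -/
open Finset Matrix

/-- Number of nonnegative lattice paths with `±1` steps of length `n` from `0` to `k`. -/
def W : ℕ → ℕ → ℕ
  | 0, 0 => 1
  | 0, _ + 1 => 0
  | n + 1, 0 => W n 1
  | n + 1, k + 1 => W n k + W n (k + 2)

lemma W_zero_zero : W 0 0 = 1 := rfl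
lemma W_zero_succ (k : ℕ) : W 0 (k + 1) = 0 := rfl
lemma W_succ_zero (n : ℕ) : W (n + 1) 0 = W n 1 := rfl
lemma W_succ_succ (n k : ℕ) : W (n + 1) (k + 1) = W n k + W n (k + 2) := rfl

lemma W_eq_zero_of_lt : ∀ n k, n < k → W n k = 0
  | 0, _ + 1, _ => rfl
  | n + 1, k + 1, h => by
    rw [W_succ_succ, W_eq_zero_of_lt n k (by omega), W_eq_zero_of_lt n (k + 2) (by omega)]

lemma W_diag : ∀ n, W n n = 1
  | 0 => rfl
  | n + 1 => by rw [W_succ_succ, W_diag n, W_eq_zero_of_lt n (n + 2) (by omega)]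

lemma W_odd : ∀ n k, (n + k) % 2 = 1 → W n k = 0
  | 0, 0, h => by omega
  | 0, k + 1, _ => rfl
  | n + 1, 0, h => by rw [W_succ_zero]; exact W_odd n 1 (by omega)
  | n + 1, k + 1, h => by
    rw [W_succ_succ, W_odd n k (by omega), W_odd n (k + 2) (by omega)]

lemma W_formula : ∀ n, ∀ k, (n + k) % 2 = 0 →
    (W n k : ℤ) = (Nat.choose n ((n + k) / 2) : ℤ) - Nat.choose n ((n + k) / 2 + 1) := by
  intro n
  induction n with
  | zero =>
    intro k h
    match k with
    | 0 => simp [W_zero_zero]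
    | k + 1 =>
      rw [W_zero_succ]
      rw [Nat.choose_eq_zero_of_lt (by omega), Nat.choose_eq_zero_of_lt (by omega)]
      simp
  | succ n ih =>
    intro k h
    match k with
    | 0 =>
      -- n is odd, write n = 2*m+1
      obtain ⟨m, rfl⟩ : ∃ m, n = 2 * m + 1 := ⟨n / 2, by omega⟩
      rw [W_succ_zero, ih 1 (by omega)]
      have h1 : (2 * m + 1 + 1) / 2 = m + 1 := by omega
      rw [h1]
      have hp1 : Nat.choose (2 * m + 1 + 1) (m + 1)
          = Nat.choose (2 * m + 1) m + Nat.choose (2 * m + 1) (m + 1) :=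
        Nat.choose_succ_succ _ _
      have hp2 : Nat.choose (2 * m + 1 + 1) (m + 1 + 1)
          = Nat.choose (2 * m + 1) (m + 1) + Nat.choose (2 * m + 1) (m + 1 + 1) :=
        Nat.choose_succ_succ _ _
      have hsym : Nat.choose (2 * m + 1) m = Nat.choose (2 * m + 1) (m + 1) := by
        have := Nat.choose_symm (n := 2 * m + 1) (k := m + 1) (by omega)
        have h3 : 2 * m + 1 - (m + 1) = m := by omega
        rw [h3] at this
        exact this
      rw [hp1, hp2]
      push_cast
      rw [hsym]
      ring
    | k + 1 =>
      -- n + k is even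
      obtain ⟨m, hm⟩ : ∃ m, n + k = 2 * m := ⟨(n + k) / 2, by omega⟩
      rw [W_succ_succ]
      push_cast
      rw [ih k (by omega), ih (k + 2) (by omega)]
      have h1 : (n + k) / 2 = m := by omega
      have h2 : (n + (k + 2)) / 2 = m + 1 := by omega
      have h3 : (n + 1 + (k + 1)) / 2 = m + 1 := by omega
      rw [h1, h2, h3]
      have hp1 : Nat.choose (n + 1) (m + 1)
          = Nat.choose n m + Nat.choose n (m + 1) := Nat.choose_succ_succ _ _
      have hp2 : Nat.choose (n + 1) (m + 1 + 1)
          = Nat.choose n (m + 1) + Nat.choose n (m + 1 + 1) := Nat.choose_succ_succ _ _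
      rw [hp1, hp2]
      push_cast
      ring

lemma W_catalan (n : ℕ) : W (2 * n) 0 = catalan n := by
  have h := W_formula (2 * n) 0 (by omega)
  have h2 : (2 * n + 0) / 2 = n := by omega
  rw [h2] at h
  have h3 : Nat.choose (2 * n) (n + 1) * (n + 1) = Nat.choose (2 * n) n * n := by
    rw [Nat.choose_succ_right_eq]; congr 1; omega
  have h4 : (n + 1) * catalan n = Nat.choose (2 * n) n := by
    rw [succ_mul_catalan_eq_centralBinom]; rfl
  have key : ((n : ℤ) + 1) * (W (2 * n) 0 : ℤ) = ((n : ℤ) + 1) * (catalan n : ℤ) := by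
    rw [h]
    have h3' : (Nat.choose (2 * n) (n + 1) : ℤ) * ((n : ℤ) + 1)
        = (Nat.choose (2 * n) n : ℤ) * n := by exact_mod_cast congrArg (Nat.cast (R := ℤ)) h3
    have h4' : ((n : ℤ) + 1) * (catalan n : ℤ) = (Nat.choose (2 * n) n : ℤ) := by
      exact_mod_cast congrArg (Nat.cast (R := ℤ)) h4
    linarith
  have hne : ((n : ℤ) + 1) ≠ 0 := by positivity
  exact_mod_cast mul_left_cancel₀ hne key

lemma T_swap (m n s : ℕ) (hs : m + n ≤ s) :
    ∑ k ∈ range (s + 2), W (m + 1) k * W n k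
      = ∑ k ∈ range (s + 2), W m k * W (n + 1) k := by
  rw [Finset.sum_range_succ' (fun k => W (m + 1) k * W n k) (s + 1),
      Finset.sum_range_succ' (fun k => W m k * W (n + 1) k) (s + 1)]
  simp only [W_succ_succ, W_succ_zero, add_mul, mul_add]
  rw [Finset.sum_add_distrib, Finset.sum_add_distrib]
  rw [Finset.sum_range_succ' (fun k => W m k * W n (k + 1)) s]
  rw [Finset.sum_range_succ (fun k => W m (k + 2) * W n (k + 1)) s]
  rw [Finset.sum_range_succ' (fun k => W m (k + 1) * W n k) s]
  rw [Finset.sum_range_succ (fun k => W m (k + 1) * W n (k + 2)) s]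
  rw [W_eq_zero_of_lt m (s + 2) (by omega), W_eq_zero_of_lt n (s + 2) (by omega)]
  ring

lemma T_trunc (m n r₁ r₂ : ℕ) (h1 : m < r₁) (h2 : r₁ ≤ r₂) :
    ∑ k ∈ range r₂, W m k * W n k = ∑ k ∈ range r₁, W m k * W n k := by
  refine (Finset.sum_subset (Finset.range_subset_range.mpr h2) ?_).symm
  intro x _ hx
  rw [Finset.mem_range, not_lt] at hx
  rw [W_eq_zero_of_lt m x (by omega), zero_mul]

lemma T_base (m r : ℕ) (hr : 1 ≤ r) : ∑ k ∈ range r, W m k * W 0 k = W m 0 := by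
  rw [Finset.sum_eq_single 0]
  · rw [W_zero_zero, mul_one]
  · intro b _ hb
    obtain ⟨b', rfl⟩ := Nat.exists_eq_succ_of_ne_zero hb
    rw [W_zero_succ, mul_zero]
  · intro h; exact absurd (Finset.mem_range.mpr hr) h

lemma T_main : ∀ n m, ∑ k ∈ range (m + n + 2), W m k * W n k = W (m + n) 0 := by
  intro n
  induction n with
  | zero => intro m; simpa using T_base m (m + 0 + 2) (by omega)
  | succ n ih =>
    intro m
    have hswap := T_swap m n (m + n + 1) (by omega)
    have hih := ih (m + 1)
    have e1 : m + (n + 1) + 2 = m + n + 1 + 2 := by omega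
    have e2 : m + 1 + n + 2 = m + n + 1 + 2 := by omega
    have e3 : m + 1 + n = m + (n + 1) := by omega
    rw [e1, ← hswap]
    rw [e2, e3] at hih
    exact hih

lemma sum_even_of_odd_zero (f : ℕ → ℕ) (hodd : ∀ k, k % 2 = 1 → f k = 0) :
    ∀ n, ∑ k ∈ range (2 * n), f k = ∑ k ∈ range n, f (2 * k) := by
  intro n
  induction n with
  | zero => simp
  | succ n ih =>
    have e : 2 * (n + 1) = (2 * n + 1) + 1 := by omega
    rw [e, Finset.sum_range_succ, Finset.sum_range_succ, ih,
        hodd (2 * n + 1) (by omega), add_zero, Finset.sum_range_succ]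

lemma key_sum (d i j : ℕ) (hi : i ≤ d) (_hj : j ≤ d) :
    ∑ k ∈ range (d + 1), W (2 * i) (2 * k) * W (2 * j) (2 * k) = catalan (i + j) := by
  have h1 : ∑ k ∈ range (2 * i + 2 * j + 2), W (2 * i) k * W (2 * j) k
      = W (2 * i + 2 * j) 0 := T_main (2 * j) (2 * i)
  have h2 := T_trunc (2 * i) (2 * j) (2 * i + 1) (2 * i + 2 * j + 2) (by omega) (by omega)
  have h3 := T_trunc (2 * i) (2 * j) (2 * i + 1) (2 * (d + 1)) (by omega) (by omega)
  have h4 : ∑ k ∈ range (2 * (d + 1)), W (2 * i) k * W (2 * j) k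
      = ∑ k ∈ range (d + 1), W (2 * i) (2 * k) * W (2 * j) (2 * k) := by
    refine sum_even_of_odd_zero (fun k => W (2 * i) k * W (2 * j) k) ?_ (d + 1)
    intro k hk
    show W (2 * i) k * W (2 * j) k = 0
    rw [W_odd (2 * i) k (by omega), zero_mul]
  have h5 : 2 * i + 2 * j = 2 * (i + j) := by omega
  rw [← h4, h3, ← h2, h1, h5, W_catalan]

/-- The `(d+1)×(d+1)` Hankel matrix of Catalan numbers has determinant `1`;
in particular it is invertible. -/
theorem catalan_hankel_det (d : ℕ) :
    (Matrix.of fun (i j : Fin (d + 1)) => (catalan ((i : ℕ) + j) : ℝ)).det = 1 ∧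
    IsUnit (Matrix.of fun (i j : Fin (d + 1)) => (catalan ((i : ℕ) + j) : ℝ)) := by
  set L : Matrix (Fin (d + 1)) (Fin (d + 1)) ℝ :=
    Matrix.of fun i k => (W (2 * (i : ℕ)) (2 * (k : ℕ)) : ℝ) with hLdef
  have hfact : (Matrix.of fun (i j : Fin (d + 1)) => (catalan ((i : ℕ) + j) : ℝ))
      = L * Lᵀ := by
    ext i j
    rw [Matrix.mul_apply]
    simp only [hLdef, Matrix.transpose_apply, Matrix.of_apply]
    have := key_sum d i j (by omega) (by omega)
    calc (catalan ((i : ℕ) + j) : ℝ)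
        = ((∑ k ∈ range (d + 1), W (2 * (i : ℕ)) (2 * k) * W (2 * (j : ℕ)) (2 * k) : ℕ) : ℝ) := by
          rw [this]
      _ = ∑ k ∈ range (d + 1),
            (W (2 * (i : ℕ)) (2 * k) : ℝ) * (W (2 * (j : ℕ)) (2 * k) : ℝ) := by
          push_cast; rfl
      _ = ∑ k : Fin (d + 1),
            (W (2 * (i : ℕ)) (2 * (k : ℕ)) : ℝ) * (W (2 * (j : ℕ)) (2 * (k : ℕ)) : ℝ) :=
          (Fin.sum_univ_eq_sum_range
            (fun k => (W (2 * (i : ℕ)) (2 * k) : ℝ) * (W (2 * (j : ℕ)) (2 * k) : ℝ)) (d + 1)).symm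
  have hLtri : L.BlockTriangular OrderDual.toDual := by
    intro i j hij
    simp only [hLdef, Matrix.of_apply]
    rw [W_eq_zero_of_lt (2 * (i : ℕ)) (2 * (j : ℕ)) (by
      have : (i : ℕ) < (j : ℕ) := hij
      omega)]
    exact Nat.cast_zero
  have hdetL : L.det = 1 := by
    rw [Matrix.det_of_lowerTriangular L hLtri]
    have : ∀ i : Fin (d + 1), L i i = 1 := by
      intro i
      simp only [hLdef, Matrix.of_apply]
      rw [W_diag]
      exact Nat.cast_one
    simp [this]
  have hdet : (Matrix.of fun (i j : Fin (d + 1)) => (catalan ((i : ℕ) + j) : ℝ)).det = 1 := by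
    rw [hfact, Matrix.det_mul, Matrix.det_transpose, hdetL, mul_one]
  refine ⟨hdet, ?_⟩
  rw [Matrix.isUnit_iff_isUnit_det, hdet]
  exact isUnit_one
end

section
/- For every d ∈ ℕ, the (d+1)×(d+1) Hankel matrix with (i,j)-entry equal to the central binomial coefficient C(2(i+j), i+j) has determinant 2^d; in particular it is invertible. -/
/-!
The Hankel matrix factors as `L D Lᵀ` with `L i k = C(2i, i+k)` and `D = diag(1, 2, …, 2)`.
`L` is unitriangular, since `C(2i, i+k)` vanishes for `k > i` and equals `1` for `k = i`, so the
determinant is `det D = 2^d`. Entrywise the factorization is Vandermonde's identity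
`C(2i+2j, i+j) = ∑ₐ C(2i, a) C(2j, i+j-a)`: by the symmetry of binomial coefficients the terms
`a = i - k` and `a = i + k` both equal `C(2i, i+k) C(2j, j+k)`, which gives the weights `1, 2, 2, …`.
-/

open Finset Matrix

theorem Nat.sum_range_choose_two_mul_mul_eq_of_le {i N : ℕ} (hi : i ≤ N) (c : ℕ → ℕ) :
    ∑ k ∈ range i, (2 * i).choose (i + (k + 1)) * c k =
      ∑ k ∈ range N, (2 * i).choose (i + (k + 1)) * c k :=
  sum_subset (range_subset_range.2 hi) fun k _ hk => by
    rw [Nat.choose_eq_zero_of_lt (by rw [mem_range] at hk; omega), zero_mul]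

theorem Nat.choose_two_mul_add_eq_sum (i j N : ℕ) (hi : i ≤ N) (hj : j ≤ N) :
    (2 * (i + j)).choose (i + j) = (2 * i).choose i * (2 * j).choose j +
      2 * ∑ k ∈ range N, (2 * i).choose (i + (k + 1)) * (2 * j).choose (j + (k + 1)) := by
  set g := fun k => (2 * i).choose (i + (k + 1)) * (2 * j).choose (j + (k + 1))
  have lower : ∑ a ∈ range i, (2 * i).choose a * (2 * j).choose (i + j - a) =
      ∑ k ∈ range i, g k := by
    rw [← sum_range_reflect]
    refine sum_congr rfl fun k hk => ?_
    have hk : k < i := mem_range.1 hk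
    rw [Nat.choose_symm_of_eq_add (show 2 * i = (i - 1 - k) + (i + (k + 1)) by omega)]
    congr 2; omega
  have upper : ∑ k ∈ range j, (2 * i).choose (i + 1 + k) * (2 * j).choose (i + j - (i + 1 + k)) =
      ∑ k ∈ range j, g k := by
    refine sum_congr rfl fun k hk => ?_
    have hk : k < j := mem_range.1 hk
    rw [Nat.choose_symm_of_eq_add (show 2 * j = (i + j - (i + 1 + k)) + (j + (k + 1)) by omega)]
    congr 2; omega
  have extend_i : ∑ k ∈ range i, g k = ∑ k ∈ range N, g k :=
    Nat.sum_range_choose_two_mul_mul_eq_of_le hi _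
  have extend_j : ∑ k ∈ range j, g k = ∑ k ∈ range N, g k := by
    simp only [g, mul_comm ((2 * i).choose _)]
    exact Nat.sum_range_choose_two_mul_mul_eq_of_le hj _
  calc (2 * (i + j)).choose (i + j)
      = ∑ a ∈ range (i + 1 + j), (2 * i).choose a * (2 * j).choose (i + j - a) := by
        rw [mul_add, Nat.add_choose_eq, Nat.sum_antidiagonal_eq_sum_range_succ_mk, add_right_comm]
    _ = _ := by
        rw [sum_range_add, sum_range_succ, lower, upper, extend_i, extend_j, Nat.add_sub_cancel_left]
        ring

namespace Matrix

section CommSemiring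

variable (R : Type*) [CommSemiring R]

def centralBinomFactor (n : ℕ) : Matrix (Fin n) (Fin n) R :=
  of fun i k => ((2 * (i : ℕ)).choose (i + k) : R)

def centralBinomWeight (d : ℕ) : Fin (d + 1) → R := Fin.cons 1 fun _ => 2

theorem centralBinom_hankel_eq_mul (d : ℕ) :
    (of fun i j : Fin (d + 1) => ((2 * ((i : ℕ) + j)).choose ((i : ℕ) + j) : R)) =
      centralBinomFactor R (d + 1) * diagonal (centralBinomWeight R d) *
        (centralBinomFactor R (d + 1))ᵀ := by
  ext i j
  rw [of_apply, Nat.choose_two_mul_add_eq_sum i j d (Fin.is_le i) (Fin.is_le j), mul_apply]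
  simp only [mul_diagonal, transpose_apply, Fin.sum_univ_succ, centralBinomFactor,
    centralBinomWeight, of_apply, Fin.cons_zero, Fin.cons_succ, Fin.val_zero, Fin.val_succ,
    add_zero, mul_one]
  push_cast
  rw [Fin.sum_univ_eq_sum_range (fun k => ((2 * (i : ℕ)).choose (i + (k + 1)) : R) * 2 *
      (2 * (j : ℕ)).choose (j + (k + 1))), mul_sum]
  simp only [mul_right_comm _ (2 : R), mul_comm (2 : R)]

end CommSemiring

variable (R : Type*) [CommRing R]

theorem det_centralBinomFactor (n : ℕ) : (centralBinomFactor R n).det = 1 := by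
  rw [det_of_isLowerTriangular _ fun i k hik => ?_]
  · refine prod_eq_one fun i _ => ?_
    simp [centralBinomFactor, ← two_mul]
  · have : (i : ℕ) < k := hik
    simp [centralBinomFactor, Nat.choose_eq_zero_of_lt (show 2 * (i : ℕ) < i + k by omega)]

theorem det_diagonal_centralBinomWeight (d : ℕ) :
    (diagonal (centralBinomWeight R d)).det = 2 ^ d := by
  simp [det_diagonal, Fin.prod_univ_succ, centralBinomWeight]

end Matrix

/-- The `(d+1)×(d+1)` Hankel matrix of central binomial coefficients
`C(2(i+j), i+j)` has determinant `2^d`; in particular it is invertible. -/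
theorem centralBinom_hankel_det (d : ℕ) :
    (Matrix.of fun (i j : Fin (d + 1)) =>
        (Nat.choose (2 * ((i : ℕ) + j)) ((i : ℕ) + j) : ℝ)).det = 2 ^ d ∧
    IsUnit (Matrix.of fun (i j : Fin (d + 1)) =>
        (Nat.choose (2 * ((i : ℕ) + j)) ((i : ℕ) + j) : ℝ)) := by
  have hdet : (Matrix.of fun (i j : Fin (d + 1)) =>
      (Nat.choose (2 * ((i : ℕ) + j)) ((i : ℕ) + j) : ℝ)).det = 2 ^ d := by
    rw [Matrix.centralBinom_hankel_eq_mul, Matrix.det_mul, Matrix.det_mul, Matrix.det_transpose,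
      Matrix.det_centralBinomFactor, Matrix.det_diagonal_centralBinomWeight, one_mul, mul_one]
  exact ⟨hdet, (Matrix.isUnit_iff_isUnit_det _).2 (hdet ▸ isUnit_iff_ne_zero.2 (by positivity))⟩
end

section
/- For every d ∈ ℕ, the (d+1)×(d+1) Hankel matrix with (i,j)-entry 2^{−2(i+j)}·C(2(i+j), i+j) (the coefficients of 1/√(1−x)) is invertible. -/
/-!
Up to the congruence by `diagonal (4⁻ⁱ)`, the matrix is the Hankel matrix of the central binomial
coefficients, which factors as `L * diagonal (1, 2, …, 2) * Lᵀ` with `L i k = C(2i, i+k)`.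
Since `L` is unitriangular, this Hankel determinant is `2 ^ d`.
-/

open Finset Matrix

namespace Nat

/-- Vandermonde's identity for `C(2i + 2j, i + j)`, split at the middle term and folded by the
symmetry `C(m, t) = C(m, m - t)`. -/
theorem centralBinom_add_eq_sum (i j n : ℕ) (hi : i ≤ n) (hj : j ≤ n) :
    (i + j).centralBinom = ∑ k ∈ range (n + 1),
      (if k = 0 then 1 else 2) * ((2 * i).choose (i + k) * (2 * j).choose (j + k)) := by
  set f : ℕ → ℕ := fun k => (2 * i).choose (i + k) * (2 * j).choose (j + k)
  set g : ℕ → ℕ := fun t => (2 * i).choose t * (2 * j).choose (i + j - t)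
  have extend : ∀ m ≤ n, (∀ k, m ≤ k → f (k + 1) = 0) →
      ∑ k ∈ range m, f (k + 1) = ∑ k ∈ range n, f (k + 1) := fun m hm hf =>
    sum_subset (range_subset_range.2 hm) fun k _ hk => hf k (by simpa using hk)
  have lower : ∑ t ∈ range (i + 1), g t = f 0 + ∑ k ∈ range n, f (k + 1) := by
    rw [← sum_range_reflect, sum_range_succ', add_comm, ← extend i hi fun k hk => by
      simp only [f, choose_eq_zero_of_lt (show 2 * i < i + (k + 1) by omega), zero_mul]]
    congr 1
    · simp only [f, g]
      congr 2; omega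
    · refine sum_congr rfl fun k hk => ?_
      rw [mem_range] at hk
      simp only [f, g, ← choose_symm (show i + (k + 1) ≤ 2 * i by omega)]
      congr 2 <;> omega
  have upper : ∑ k ∈ range j, g (i + 1 + k) = ∑ k ∈ range n, f (k + 1) := by
    rw [← extend j hj fun k hk => by
      simp only [f, choose_eq_zero_of_lt (show 2 * j < j + (k + 1) by omega), mul_zero]]
    refine sum_congr rfl fun k hk => ?_
    rw [mem_range] at hk
    simp only [f, g, ← choose_symm (show j + (k + 1) ≤ 2 * j by omega)]
    congr 2 <;> omega
  calc (i + j).centralBinom = ∑ t ∈ range (i + 1 + j), g t := by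
        rw [centralBinom_eq_two_mul_choose, mul_add, add_choose_eq,
          Finset.Nat.sum_antidiagonal_eq_sum_range_succ_mk, add_right_comm]
    _ = _ := by
      rw [sum_range_add, lower, upper, sum_range_succ']
      simp only [add_one_ne_zero, if_false, if_pos, one_mul, ← mul_sum]
      ring

end Nat

namespace Matrix

variable {R : Type*}

def hankel [Zero R] (a : ℕ → R) (n : ℕ) : Matrix (Fin n) (Fin n) R :=
  of fun i j => a (i + j)

theorem hankel_apply [Zero R] (a : ℕ → R) (n : ℕ) (i j : Fin n) :
    hankel a n i j = a (i + j) :=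
  rfl

theorem hankel_geom_mul [CommSemiring R] (c : R) (a : ℕ → R) (n : ℕ) :
    hankel (fun k => c ^ k * a k) n =
      diagonal (fun i : Fin n => c ^ (i : ℕ)) * hankel a n *
        diagonal (fun i : Fin n => c ^ (i : ℕ)) := by
  ext i j
  simp only [hankel_apply, diagonal_mul, mul_diagonal, pow_add]
  ring

theorem isUnit_hankel_geom_mul [CommRing R] {c : R} (hc : IsUnit c) {a : ℕ → R} {n : ℕ}
    (ha : IsUnit (hankel a n)) : IsUnit (hankel (fun k => c ^ k * a k) n) := by
  have hd : IsUnit (diagonal fun i : Fin n => c ^ (i : ℕ)) :=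
    isUnit_diagonal.2 (Pi.isUnit_iff.2 fun i => hc.pow _)
  rw [hankel_geom_mul]
  exact (hd.mul ha).mul hd

def centralBinomLower (R : Type*) [Semiring R] (n : ℕ) : Matrix (Fin n) (Fin n) R :=
  of fun i k => ((2 * (i : ℕ)).choose (i + k) : R)

theorem centralBinomLower_isLowerTriangular [Semiring R] (n : ℕ) :
    (centralBinomLower R n).IsLowerTriangular := fun i k hik => by
  have hik : (i : ℕ) < k := hik
  simp only [centralBinomLower, of_apply,
    Nat.choose_eq_zero_of_lt (by omega : 2 * (i : ℕ) < i + k), Nat.cast_zero]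

theorem det_centralBinomLower [CommRing R] (n : ℕ) : (centralBinomLower R n).det = 1 := by
  rw [det_of_isLowerTriangular _ (centralBinomLower_isLowerTriangular n)]
  refine prod_eq_one fun i _ => ?_
  simp only [centralBinomLower, of_apply, ← two_mul, Nat.choose_self, Nat.cast_one]

theorem hankel_centralBinom_eq [CommSemiring R] (d : ℕ) :
    hankel (fun k => (k.centralBinom : R)) (d + 1) =
      centralBinomLower R (d + 1) *
        diagonal (fun k : Fin (d + 1) => if (k : ℕ) = 0 then 1 else 2) *
          (centralBinomLower R (d + 1))ᵀ := by
  ext i j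
  rw [mul_apply]
  simp only [hankel_apply, mul_diagonal, transpose_apply, centralBinomLower, of_apply]
  rw [Nat.centralBinom_add_eq_sum i j d (by omega) (by omega), Fin.sum_univ_eq_sum_range
    (fun k => ((2 * (i : ℕ)).choose (i + k) : R) * (if k = 0 then 1 else 2) *
      (2 * (j : ℕ)).choose (j + k))]
  push_cast
  refine sum_congr rfl fun k _ => ?_
  split_ifs <;> ring

theorem det_hankel_centralBinom [CommRing R] (d : ℕ) :
    (hankel (fun k => (k.centralBinom : R)) (d + 1)).det = 2 ^ d := by
  rw [hankel_centralBinom_eq, det_mul, det_mul, det_transpose, det_centralBinomLower,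
    det_diagonal, Fin.prod_univ_succ]
  simp

end Matrix

/-- The `(d+1)×(d+1)` Hankel matrix of the coefficients `2^{-2k} C(2k,k)` of
`1/√(1-x)` is invertible. -/
theorem gOneHalf_hankel_invertible (d : ℕ) :
    IsUnit (Matrix.of fun (i j : Fin (d + 1)) =>
        (Nat.choose (2 * ((i : ℕ) + j)) ((i : ℕ) + j) : ℝ) / 2 ^ (2 * ((i : ℕ) + j))) := by
  have hH : IsUnit (hankel (fun k => (k.centralBinom : ℝ)) (d + 1)) := by
    rw [isUnit_iff_isUnit_det, det_hankel_centralBinom]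
    exact isUnit_iff_ne_zero.2 (pow_ne_zero d two_ne_zero)
  convert isUnit_hankel_geom_mul (c := (4 : ℝ)⁻¹) (by norm_num) hH using 1
  ext i j
  rw [hankel_apply, of_apply, Nat.centralBinom_eq_two_mul_choose, pow_mul, inv_pow,
    div_eq_inv_mul]
  norm_num
end

section
/- Algebraic identity for the auxiliary series w: with b ≠ c nonzero complex numbers, let f be the formal power series with f(0)=1 and f² = (1−bx)(1−cx), and set w(x) = (1 − ((b+c)/2)x − f(x))/(2x). Then w satisfies w(x) = x·(α + β·w(x) + w(x)²) with α = (b−c)²/16 and β = (b+c)/2. -/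
/-! Substituting `f = 1 - βx - 2xw` into `f² = (1 - bx)(1 - cx)` and using `4β² - 4bc = (b - c)² = 16α`
leaves `16x · (x(α + βw + w²) - w) = 0`, a ring identity; in `ℂ⟦X⟧` the factor `16X` cancels. -/

open PowerSeries

theorem sixteen_mul_mul_sub_eq_zero_of_sq_eq {R : Type*} [CommRing R] {x f w α β b c : R}
    (hβ : 2 * β = b + c) (hα : 16 * α = (b - c) ^ 2)
    (hw : 2 * x * w = 1 - β * x - f) (hf : f ^ 2 = (1 - b * x) * (1 - c * x)) :
    16 * x * (x * (α + β * w + w ^ 2) - w) = 0 := by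
  obtain rfl : f = 1 - β * x - 2 * x * w := by linear_combination hw
  linear_combination 4 * hf + x ^ 2 * hα + (4 * x - x ^ 2 * (2 * β + b + c)) * hβ

theorem aux_series_identity_general (b c : ℂ)
    (f w : PowerSeries ℂ)
    (hf : f ^ 2 = (1 - PowerSeries.C b * PowerSeries.X)
      * (1 - PowerSeries.C c * PowerSeries.X))
    (hw : PowerSeries.C 2 * PowerSeries.X * w
      = 1 - PowerSeries.C ((b + c) / 2) * PowerSeries.X - f) :
    w = PowerSeries.X * (PowerSeries.C ((b - c) ^ 2 / 16)
      + PowerSeries.C ((b + c) / 2) * w + w ^ 2) := by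
  have hβ : 2 * C ((b + c) / 2) = C b + C c := by
    rw [← map_ofNat C 2, ← map_mul, ← map_add]; congr 1; ring
  have hα : 16 * C ((b - c) ^ 2 / 16) = (C b - C c) ^ 2 := by
    rw [← map_ofNat C 16, ← map_mul, ← map_sub, ← map_pow]; congr 1; ring
  rw [map_ofNat] at hw
  have h := sixteen_mul_mul_sub_eq_zero_of_sq_eq hβ hα hw hf
  have h16 : (16 : ℂ⟦X⟧) ≠ 0 := by rw [← map_ofNat C 16, map_ne_zero]; norm_num
  have h16X : (16 : ℂ⟦X⟧) * X ≠ 0 := mul_ne_zero h16 X_ne_zero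
  exact (sub_eq_zero.mp ((mul_eq_zero.mp h).resolve_left h16X)).symm

/-- Algebraic identity for the auxiliary series
`w = (1 − ((b+c)/2)x − √((1−bx)(1−cx)))/(2x)`: it satisfies
`w = x·(α + β·w + w²)` with `α = (b−c)²/16` and `β = (b+c)/2`. -/
theorem aux_series_identity (b c : ℂ) (hb : b ≠ 0) (hc : c ≠ 0) (hbc : b ≠ c)
    (f w : PowerSeries ℂ)
    (hf0 : PowerSeries.coeff 0 f = 1)
    (hf : f ^ 2 = (1 - PowerSeries.C b * PowerSeries.X)
      * (1 - PowerSeries.C c * PowerSeries.X))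
    (hw : PowerSeries.C 2 * PowerSeries.X * w
      = 1 - PowerSeries.C ((b + c) / 2) * PowerSeries.X - f) :
    w = PowerSeries.X * (PowerSeries.C ((b - c) ^ 2 / 16)
      + PowerSeries.C ((b + c) / 2) * w + w ^ 2) :=
  aux_series_identity_general b c f w hf hw
end

section
/- Full rank of the Hankel matrix associated with G(x) = (8/(b−c)²)·(1 − ((b+c)/2)x − √((1−bx)(1−cx)))/x²: for nonzero complex numbers b ≠ c and every d ∈ ℕ, the (d+1)×(d+1) Hankel matrix with (i,j)-entry equal to the coefficient of x^{i+j} in G is invertible. -/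
/-!
Let `s = (b + c)/2` and `t = (b - c)²/16`. Squaring `f = 1 - s x - 2 t x² G` shows that
`G = 1 + s x G + t x² G²`, so `G` counts Motzkin paths with level steps weighted `s` and down
steps weighted `t`. For such a `G` the Riordan array `L = (G, x G)` is lower unitriangular,
its rows obey the three-term recurrence of the Jacobi matrix `J` with diagonal `s`, and
`diag(tʰ) J` is symmetric. Hence `Σₕ tʰ L i h L j h` only depends on `i + j`, and equals the
Hankel entry `[x^(i+j)] G`. So the Hankel matrix is `L · diag(tʰ) · Lᵀ`, with determinant
`t^(d(d+1)/2) ≠ 0`.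
-/

open PowerSeries Finset
open scoped Matrix

section Jacobi

variable {R : Type*} [CommRing R]

def jacobiStep (s t : R) (u : ℕ → R) : ℕ → R
  | 0 => s * u 0 + t * u 1
  | h + 1 => u h + s * u (h + 1) + t * u (h + 2)

theorem sum_pow_mul_jacobiStep_sub (s t : R) (u v : ℕ → R) (N : ℕ) :
    ∑ h ∈ range (N + 1), t ^ h * (jacobiStep s t u h * v h - u h * jacobiStep s t v h)
      = t ^ (N + 1) * (u (N + 1) * v N - u N * v (N + 1)) := by
  induction N with
  | zero => simp only [zero_add, sum_range_one, jacobiStep]; ring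
  | succ N ih => rw [sum_range_succ, ih]; simp only [jacobiStep]; ring

theorem sum_pow_mul_jacobiStep_symm (s t : R) {u v : ℕ → R} {N : ℕ}
    (hu : ∀ h ≥ N, u h = 0) (hv : ∀ h ≥ N, v h = 0) :
    ∑ h ∈ range (N + 1), t ^ h * jacobiStep s t u h * v h
      = ∑ h ∈ range (N + 1), t ^ h * u h * jacobiStep s t v h := by
  rw [← sub_eq_zero, ← sum_sub_distrib]
  calc ∑ h ∈ range (N + 1),
        (t ^ h * jacobiStep s t u h * v h - t ^ h * u h * jacobiStep s t v h)
      = ∑ h ∈ range (N + 1), t ^ h * (jacobiStep s t u h * v h - u h * jacobiStep s t v h) :=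
        sum_congr rfl fun _ _ => by ring
    _ = 0 := by
      rw [sum_pow_mul_jacobiStep_sub, hu N le_rfl, hv N le_rfl, hu (N + 1) N.le_succ,
        hv (N + 1) N.le_succ]
      ring

end Jacobi

namespace PowerSeries

variable {R : Type*} [CommRing R]

noncomputable def riordanCoeff (G : R⟦X⟧) (n h : ℕ) : R := coeff n (X ^ h * G ^ (h + 1))

theorem riordanCoeff_of_lt (G : R⟦X⟧) {n h : ℕ} (hnh : n < h) : riordanCoeff G n h = 0 := by
  rw [riordanCoeff, coeff_X_pow_mul', if_neg (not_le.mpr hnh)]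

theorem riordanCoeff_zero_right (G : R⟦X⟧) (n : ℕ) : riordanCoeff G n 0 = coeff n G := by
  simp [riordanCoeff]

section

variable {s t : R} {G : R⟦X⟧} (hG : G = 1 + C s * X * G + C t * X ^ 2 * G ^ 2)
include hG

theorem constantCoeff_eq_one_of_eq_one_add : constantCoeff G = 1 := by
  rw [hG]; simp

theorem riordanCoeff_self (n : ℕ) : riordanCoeff G n n = 1 := by
  rw [riordanCoeff, coeff_X_pow_mul', if_pos le_rfl, Nat.sub_self, coeff_zero_eq_constantCoeff,
    map_pow, constantCoeff_eq_one_of_eq_one_add hG, one_pow]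

theorem riordanCoeff_zero_left (h : ℕ) : riordanCoeff G 0 h = if h = 0 then 1 else 0 := by
  rcases h with _ | h
  · exact riordanCoeff_self hG 0
  · exact riordanCoeff_of_lt G h.succ_pos

theorem jacobiStep_riordanCoeff (n : ℕ) :
    jacobiStep s t (riordanCoeff G n) = riordanCoeff G (n + 1) := by
  funext h
  cases h with
  | zero =>
    have hX : X ^ 0 * G ^ 1 = 1 + X * (C s * (X ^ 0 * G ^ 1) + C t * (X ^ 1 * G ^ 2)) := by
      linear_combination hG
    simp only [jacobiStep, riordanCoeff]
    conv_rhs => rw [hX, map_add, coeff_succ_X_mul, coeff_one, if_neg n.succ_ne_zero, map_add,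
      coeff_C_mul, coeff_C_mul, zero_add]
  | succ h =>
    have hX : X ^ (h + 1) * G ^ (h + 1 + 1) = X * (X ^ h * G ^ (h + 1)
        + C s * (X ^ (h + 1) * G ^ (h + 1 + 1)) + C t * (X ^ (h + 2) * G ^ (h + 2 + 1))) := by
      linear_combination X ^ (h + 1) * G ^ (h + 1) * hG
    simp only [jacobiStep, riordanCoeff]
    conv_rhs => rw [hX, coeff_succ_X_mul, map_add, map_add, coeff_C_mul, coeff_C_mul]

theorem sum_pow_mul_riordanCoeff_mul (N : ℕ) {i j : ℕ} (hij : i + j < N) :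
    ∑ h ∈ range N, t ^ h * riordanCoeff G i h * riordanCoeff G j h = coeff (i + j) G := by
  induction i generalizing j with
  | zero =>
    rw [sum_eq_single_of_mem 0 (mem_range.mpr (by omega))]
    · rw [riordanCoeff_self hG, riordanCoeff_zero_right, pow_zero, one_mul, one_mul, zero_add]
    · intro h _ hh
      rw [riordanCoeff_zero_left hG, if_neg hh, mul_zero, zero_mul]
  | succ i ih =>
    obtain ⟨M, rfl⟩ : ∃ M, N = M + 1 := ⟨N - 1, by omega⟩
    rw [← jacobiStep_riordanCoeff hG, sum_pow_mul_jacobiStep_symm s t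
      (fun h hh => riordanCoeff_of_lt G (by omega)) (fun h hh => riordanCoeff_of_lt G (by omega))]
    simp only [jacobiStep_riordanCoeff hG]
    rw [ih (by omega), Nat.succ_add, Nat.add_succ]

theorem hankel_eq_mul_diagonal_mul_transpose (d : ℕ) :
    Matrix.of (fun i j : Fin (d + 1) => coeff ((i : ℕ) + j) G)
      = Matrix.of (fun i h : Fin (d + 1) => riordanCoeff G i h)
        * Matrix.diagonal (fun h : Fin (d + 1) => t ^ (h : ℕ))
        * (Matrix.of fun i h : Fin (d + 1) => riordanCoeff G i h)ᵀ := by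
  ext i j
  rw [Matrix.mul_apply]
  simp only [Matrix.mul_diagonal, Matrix.transpose_apply, Matrix.of_apply]
  have hvanish : ∀ h ≥ d + 1, t ^ h * riordanCoeff G i h * riordanCoeff G j h = 0 :=
    fun h hh => by rw [riordanCoeff_of_lt G (by omega), mul_zero, zero_mul]
  rw [← sum_pow_mul_riordanCoeff_mul hG (2 * d + 1) (by omega),
    eventually_constant_sum hvanish (by omega), ← Fin.sum_univ_eq_sum_range]
  exact sum_congr rfl fun h _ => by ring

theorem det_hankel_eq_prod (d : ℕ) :
    (Matrix.of fun i j : Fin (d + 1) => coeff ((i : ℕ) + j) G).det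
      = ∏ h : Fin (d + 1), t ^ (h : ℕ) := by
  have hlower : (Matrix.of fun i h : Fin (d + 1) => riordanCoeff G i h).IsLowerTriangular :=
    fun i h hih => riordanCoeff_of_lt G hih
  rw [hankel_eq_mul_diagonal_mul_transpose hG, Matrix.det_mul, Matrix.det_mul,
    Matrix.det_transpose, Matrix.det_of_isLowerTriangular _ hlower, Matrix.det_diagonal]
  simp only [Matrix.of_apply, riordanCoeff_self hG, prod_const_one, one_mul, mul_one]

theorem isUnit_hankel (ht : IsUnit t) (d : ℕ) :
    IsUnit (Matrix.of fun i j : Fin (d + 1) => coeff ((i : ℕ) + j) G) := by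
  rw [Matrix.isUnit_iff_isUnit_det, det_hankel_eq_prod hG]
  exact IsUnit.prod_univ_iff.mpr fun h => ht.pow _

end

theorem eq_one_add_of_sq_eq {K : Type*} [Field K] [CharZero K] {b c : K} (hbc : b ≠ c)
    {f G : K⟦X⟧} (hf : f ^ 2 = (1 - C b * X) * (1 - C c * X))
    (hG : X ^ 2 * G = C (8 / (b - c) ^ 2) * (1 - C ((b + c) / 2) * X - f)) :
    G = 1 + C ((b + c) / 2) * X * G + C ((b - c) ^ 2 / 16) * X ^ 2 * G ^ 2 := by
  set s := (b + c) / 2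
  set t := (b - c) ^ 2 / 16
  have ht : t ≠ 0 := div_ne_zero (pow_ne_zero 2 (sub_ne_zero.mpr hbc)) (by norm_num)
  have hsum : C b + C c = 2 * C s := by
    rw [← map_add, ← map_ofNat C 2, ← map_mul]; congr 1; ring
  have hprod : C b * C c = C s ^ 2 - 4 * C t := by
    rw [← map_mul, ← map_ofNat C 4, ← map_mul, ← map_pow, ← map_sub]; congr 1; ring
  have hinv : C (8 / (b - c) ^ 2) * (2 * C t) = 1 := by
    rw [← map_ofNat C 2, ← map_mul, ← map_mul, ← map_one C]; congr 1; field_simp; ring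
  have hf_eq : f = 1 - C s * X - 2 * C t * X ^ 2 * G := by
    linear_combination 2 * C t * hG + (1 - C s * X - f) * hinv
  have h4t : (4 : K⟦X⟧) * C t * X ^ 2 ≠ 0 := by
    rw [← map_ofNat C 4, ← map_mul]
    exact mul_ne_zero ((map_ne_zero_iff _ C_injective).mpr (mul_ne_zero (by norm_num) ht))
      (pow_ne_zero 2 X_ne_zero)
  refine mul_left_cancel₀ h4t ?_
  rw [hf_eq] at hf
  linear_combination (-1 : K⟦X⟧) * hf + X * hsum - X ^ 2 * hprod

end PowerSeries

theorem hankel_G_full_rank_general (b c : ℂ) (hbc : b ≠ c)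
    (f G : PowerSeries ℂ)
    (hf : f ^ 2 = (1 - PowerSeries.C b * PowerSeries.X)
      * (1 - PowerSeries.C c * PowerSeries.X))
    (hG : PowerSeries.X ^ 2 * G = PowerSeries.C (8 / (b - c) ^ 2)
      * (1 - PowerSeries.C ((b + c) / 2) * PowerSeries.X - f)) (d : ℕ) :
    IsUnit (Matrix.of fun (i j : Fin (d + 1)) => PowerSeries.coeff ((i : ℕ) + j) G) := by
  have ht : (b - c) ^ 2 / 16 ≠ 0 :=
    div_ne_zero (pow_ne_zero 2 (sub_ne_zero.mpr hbc)) (by norm_num)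
  exact isUnit_hankel (eq_one_add_of_sq_eq hbc hf hG) ht.isUnit d

/-- Full rank of the Hankel matrix of
`G = (8/(b−c)²)·(1 − ((b+c)/2)x − √((1−bx)(1−cx)))/x²`: for nonzero `b ≠ c`
and every `d`, the `(d+1)×(d+1)` Hankel matrix of coefficients of `G` is
invertible. -/
theorem hankel_G_full_rank (b c : ℂ) (hb : b ≠ 0) (hc : c ≠ 0) (hbc : b ≠ c)
    (f G : PowerSeries ℂ)
    (hf0 : PowerSeries.coeff 0 f = 1)
    (hf : f ^ 2 = (1 - PowerSeries.C b * PowerSeries.X)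
      * (1 - PowerSeries.C c * PowerSeries.X))
    (hG : PowerSeries.X ^ 2 * G = PowerSeries.C (8 / (b - c) ^ 2)
      * (1 - PowerSeries.C ((b + c) / 2) * PowerSeries.X - f)) (d : ℕ) :
    IsUnit (Matrix.of fun (i j : Fin (d + 1)) => PowerSeries.coeff ((i : ℕ) + j) G) :=
  hankel_G_full_rank_general b c hbc f G hf hG d
end

section
/- Near-full rank for the square-root generating function with momentum and weight decay: for 0 ≤ μ < λ ≤ 1, let g be the formal power series with g(0)=1 and g² = 1/((1−λx)(1−μx)) (i.e., g = √(G_{λ,μ})). Then for every d ∈ ℕ, the (d+1)×(d+1) Hankel matrix with (i,j)-entry the coefficient of x^{i+j} in g has rank at least d−4 (co-rank at most 5). -/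
/-!
If the Hankel matrix kills `v`, let `V` be the polynomial whose coefficients are the entries of `v`
in reverse order. The coefficients `d, …, 2d` of `A = V g` vanish, so `A ≡ P mod X^(2d+1)` for
the truncation `P` of `A` below degree `d`. As `q g² = 1` for the quadratic
`q = (1 - λX)(1 - μX)`, we get `V² = q A² ≡ q P²`, and both sides have degree at most `2d`, so
`V² = q P²` as polynomials. Since `q` is negative on an interval, `V` vanishes there, hence
`V = 0` and `v = 0`: the Hankel matrix is invertible.
-/
open scoped Polynomial PowerSeries Matrix
noncomputable section
variable {R : Type*} [CommRing R] {d : ℕ}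

def hankelMatrix (g : R⟦X⟧) (d : ℕ) : Matrix (Fin (d + 1)) (Fin (d + 1)) R :=
  Matrix.of fun i j => PowerSeries.coeff ((i : ℕ) + j) g

def reversedPoly (v : Fin (d + 1) → R) : R[X] :=
  ∑ j : Fin (d + 1), Polynomial.monomial (d - j) (v j)

theorem natDegree_reversedPoly_le (v : Fin (d + 1) → R) : (reversedPoly v).natDegree ≤ d :=
  Polynomial.natDegree_sum_le_of_forall_le _ _ fun _ _ =>
    (Polynomial.natDegree_monomial_le _).trans (Nat.sub_le _ _)

theorem coeff_reversedPoly (v : Fin (d + 1) → R) (j : Fin (d + 1)) :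
    (reversedPoly v).coeff (d - j) = v j := by
  rw [reversedPoly, Polynomial.finsetSum_coeff, Finset.sum_eq_single j]
  · simp
  · intro k _ hkj
    rw [Polynomial.coeff_monomial, if_neg]
    omega
  · simp

theorem eq_zero_of_reversedPoly_eq_zero {v : Fin (d + 1) → R} (h : reversedPoly v = 0) :
    v = 0 := by
  ext j
  rw [← coeff_reversedPoly v j, h, Polynomial.coeff_zero, Pi.zero_apply]

theorem coeff_add_reversedPoly_mul (v : Fin (d + 1) → R) (g : R⟦X⟧) (i : ℕ) :
    PowerSeries.coeff (d + i) ((reversedPoly v : R⟦X⟧) * g) =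
      ∑ j : Fin (d + 1), PowerSeries.coeff (i + j) g * v j := by
  rw [reversedPoly, ← Polynomial.coeToPowerSeries.ringHom_apply, map_sum, Finset.sum_mul, map_sum]
  refine Finset.sum_congr rfl fun j _ => ?_
  rw [Polynomial.coeToPowerSeries.ringHom_apply, Polynomial.coe_monomial,
    PowerSeries.monomial_eq_C_mul_X_pow, mul_assoc, PowerSeries.coeff_C_mul,
    PowerSeries.coeff_X_pow_mul', if_pos (by omega), mul_comm,
    show d + i - (d - j) = i + j by have := j.is_le; omega]

theorem mulVec_hankelMatrix (g : R⟦X⟧) (v : Fin (d + 1) → R) (i : Fin (d + 1)) :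
    (hankelMatrix g d *ᵥ v) i = PowerSeries.coeff (d + i) ((reversedPoly v : R⟦X⟧) * g) := by
  rw [coeff_add_reversedPoly_mul]; rfl

theorem X_pow_dvd_sub_trunc {A : R⟦X⟧} {e : ℕ}
    (hA : ∀ n, d ≤ n → n < e → PowerSeries.coeff n A = 0) :
    PowerSeries.X ^ e ∣ A - (PowerSeries.trunc d A : R⟦X⟧) := by
  rw [PowerSeries.X_pow_dvd_iff]
  intro n hn
  rw [map_sub, Polynomial.coeff_coe, PowerSeries.coeff_trunc]
  split_ifs with h
  · exact sub_self _
  · rw [hA n (not_lt.mp h) hn, sub_zero]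

theorem Polynomial.eq_zero_of_X_pow_dvd_coe {p : R[X]} {n : ℕ} (hp : p.natDegree < n)
    (h : PowerSeries.X ^ n ∣ (p : R⟦X⟧)) : p = 0 := by
  obtain ⟨f, hf⟩ := h
  rw [← PowerSeries.trunc_coe_eq_self hp, hf, PowerSeries.trunc_X_pow_self_mul]

theorem natDegree_mul_trunc_sq_le (q : R[X]) (hq : q.natDegree ≤ 2) (A : R⟦X⟧) :
    (q * PowerSeries.trunc d A ^ 2).natDegree ≤ 2 * d := by
  by_cases hP : PowerSeries.trunc d A = 0
  · simp [hP]
  have hPd : (PowerSeries.trunc d A).natDegree < d :=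
    (Polynomial.natDegree_lt_iff_degree_lt hP).mpr (PowerSeries.degree_trunc_lt A d)
  have := Polynomial.natDegree_pow_le (p := PowerSeries.trunc d A) (n := 2)
  exact Polynomial.natDegree_mul_le.trans (by omega)

theorem sq_eq_mul_sq_trunc_of_coeff_mul_eq_zero {g : R⟦X⟧} {q V : R[X]} (hq : q.natDegree ≤ 2)
    (hg : g ^ 2 * q = 1) (hV : V.natDegree ≤ d)
    (hVg : ∀ n, d ≤ n → n ≤ 2 * d → PowerSeries.coeff n ((V : R⟦X⟧) * g) = 0) :
    V ^ 2 = q * PowerSeries.trunc d ((V : R⟦X⟧) * g) ^ 2 := by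
  set A := (V : R⟦X⟧) * g
  set P := PowerSeries.trunc d A
  have hdvd : PowerSeries.X ^ (2 * d + 1) ∣ A - (P : R⟦X⟧) :=
    X_pow_dvd_sub_trunc fun n h₁ h₂ => hVg n h₁ (by omega)
  have hfactor : ((V ^ 2 - q * P ^ 2 : R[X]) : R⟦X⟧) = q * (A + P) * (A - (P : R⟦X⟧)) := by
    push_cast
    linear_combination (-(V : R⟦X⟧) ^ 2) * hg
  have hdeg : (V ^ 2 - q * P ^ 2).natDegree < 2 * d + 1 := by
    have := Polynomial.natDegree_pow_le (p := V) (n := 2)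
    have : (q * P ^ 2).natDegree ≤ 2 * d := natDegree_mul_trunc_sq_le q hq A
    have := Polynomial.natDegree_sub_le (V ^ 2) (q * P ^ 2)
    omega
  exact sub_eq_zero.mp <| Polynomial.eq_zero_of_X_pow_dvd_coe hdeg (hfactor ▸ hdvd.mul_left _)

theorem Polynomial.eq_zero_of_sq_eq_mul_sq_of_eval_neg {V P q : ℝ[X]} {x₀ : ℝ}
    (h : V ^ 2 = q * P ^ 2) (hx₀ : q.eval x₀ < 0) : V = 0 := by
  have hopen : IsOpen {x | q.eval x < 0} := isOpen_lt q.continuous continuous_const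
  obtain ⟨a, b, hab, hneg⟩ := hopen.exists_Ioo_subset ⟨x₀, hx₀⟩
  refine V.eq_zero_of_infinite_isRoot ((Set.Ioo_infinite hab).mono fun x hx => ?_)
  have hVx : V.eval x ^ 2 = q.eval x * P.eval x ^ 2 := by
    simpa using congrArg (Polynomial.eval x) h
  have : V.eval x ^ 2 ≤ 0 := hVx ▸ mul_nonpos_of_nonpos_of_nonneg (hneg hx).le (sq_nonneg _)
  exact pow_eq_zero_iff two_ne_zero |>.mp (le_antisymm this (sq_nonneg _))

theorem isUnit_hankelMatrix {g : ℝ⟦X⟧} {q : ℝ[X]} (hq : q.natDegree ≤ 2) (hg : g ^ 2 * q = 1)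
    {x₀ : ℝ} (hx₀ : q.eval x₀ < 0) (d : ℕ) : IsUnit (hankelMatrix g d) := by
  rw [← Matrix.mulVec_injective_iff_isUnit]
  refine (injective_iff_map_eq_zero (Matrix.mulVecLin (hankelMatrix g d))).mpr fun v hv => ?_
  have hVg : ∀ n, d ≤ n → n ≤ 2 * d →
      PowerSeries.coeff n ((reversedPoly v : ℝ⟦X⟧) * g) = 0 := by
    intro n h₁ h₂
    obtain ⟨i, rfl⟩ := Nat.exists_eq_add_of_le h₁
    exact (mulVec_hankelMatrix g v ⟨i, by omega⟩).symm.trans (congrFun hv _)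
  exact eq_zero_of_reversedPoly_eq_zero <| Polynomial.eq_zero_of_sq_eq_mul_sq_of_eval_neg
    (sq_eq_mul_sq_trunc_of_coeff_mul_eq_zero hq hg (natDegree_reversedPoly_le v) hVg) hx₀

theorem eval_two_div_add_neg {l m : ℝ} (hlm : l + m ≠ 0) (hne : l ≠ m) :
    ((1 - Polynomial.C l * Polynomial.X) * (1 - Polynomial.C m * Polynomial.X)).eval
      (2 / (l + m)) < 0 := by
  simp only [Polynomial.eval_mul, Polynomial.eval_sub, Polynomial.eval_one, Polynomial.eval_C,
    Polynomial.eval_X]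
  rw [show (1 - l * (2 / (l + m))) * (1 - m * (2 / (l + m))) = -((l - m) / (l + m)) ^ 2 by
    field_simp; ring]
  exact neg_neg_of_pos (pow_two_pos_of_ne_zero (div_ne_zero (sub_ne_zero.mpr hne) hlm))
end

theorem sqrt_weighted_hankel_near_full_rank_general (l m : ℝ) (hm : 0 ≤ m) (hml : m < l)
    (g : PowerSeries ℝ)
    (hg : g ^ 2 * ((1 - PowerSeries.C l * PowerSeries.X)
      * (1 - PowerSeries.C m * PowerSeries.X)) = 1) (d : ℕ) :
    d - 4 ≤ (Matrix.of fun (i j : Fin (d + 1)) =>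
      PowerSeries.coeff ((i : ℕ) + j) g).rank := by
  have hunit : IsUnit (hankelMatrix g d) :=
    isUnit_hankelMatrix (by compute_degree) (by simpa using hg)
      (eval_two_div_add_neg (by linarith) hml.ne') d
  rw [show (Matrix.of fun (i j : Fin (d + 1)) => PowerSeries.coeff ((i : ℕ) + j) g) =
    hankelMatrix g d from rfl, Matrix.rank_of_isUnit _ hunit, Fintype.card_fin]
  omega

/-- Near-full rank for the square-root generating function with momentum `μ`
and weight decay `λ`: for `0 ≤ μ < λ ≤ 1` and `g = √(1/((1−λx)(1−μx)))`, the
`(d+1)×(d+1)` Hankel matrix of coefficients of `g` has rank at least `d − 4`. -/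
theorem sqrt_weighted_hankel_near_full_rank (l m : ℝ) (hm : 0 ≤ m) (hml : m < l) (hl : l ≤ 1)
    (g : PowerSeries ℝ)
    (hg0 : PowerSeries.coeff 0 g = 1)
    (hg : g ^ 2 * ((1 - PowerSeries.C l * PowerSeries.X)
      * (1 - PowerSeries.C m * PowerSeries.X)) = 1) (d : ℕ) :
    d - 4 ≤ (Matrix.of fun (i j : Fin (d + 1)) =>
      PowerSeries.coeff ((i : ℕ) + j) g).rank :=
  sqrt_weighted_hankel_near_full_rank_general l m hm hml g hg d
end
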